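/- arXiv:2301.04048 — 2 statements merged into one kernel-verified Lean document; each statement's English description precedes it below -/
import Mathlib

section
/- Let f : ℝⁿ → ℝⁿ be a smooth vector field, and suppose there exist N > 0 and real coefficients α_0, …, α_{N-1} such that L_f^N f = ∑_{k=0}^{N-1} α_k L_f^k f (as functions ℝⁿ → ℝⁿ, where L_f applied componentwise). Define p_j := L_f^j f for j = 0, …, N-1 and z := (x, p_0(x), …, p_{N-1}(x)). Then along any solution x(t) of ẋ = f(x), the curve z(t) satisfies a linear ODE ż = A z with A a constant matrix (in block companion form). -/
/-- Lie derivative of a vector-valued map `g` along the vector field `f`: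
`(L_f g)(x) = Dg(x) · f(x)`. -/
noncomputable def lieDeriv {n : ℕ} (f g : (Fin n → ℝ) → (Fin n → ℝ)) :
    (Fin n → ℝ) → (Fin n → ℝ) :=
  fun x => fderiv ℝ g x (f x)

/-- Iterated Lie derivative: `L_f^0 f = f`, `L_f^(k+1) f = L_f (L_f^k f)`. -/
noncomputable def lieIter {n : ℕ} (f : (Fin n → ℝ) → (Fin n → ℝ)) :
    ℕ → (Fin n → ℝ) → (Fin n → ℝ)
  | 0 => f
  | k + 1 => lieDeriv f (lieIter f k)

lemma lieIter_contDiff {n : ℕ} {f : (Fin n → ℝ) → (Fin n → ℝ)}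
    (hf : ContDiff ℝ (⊤ : ℕ∞) f) (k : ℕ) : ContDiff ℝ (⊤ : ℕ∞) (lieIter f k) := by
  induction k with
  | zero => exact hf
  | succ k ih =>
    have h1 : ContDiff ℝ (⊤ : ℕ∞) (fun x => fderiv ℝ (lieIter f k) x) :=
      ih.fderiv_right (by simp)
    exact h1.clm_apply hf

lemma lieIter_deriv {n : ℕ} {f : (Fin n → ℝ) → (Fin n → ℝ)}
    (hf : ContDiff ℝ (⊤ : ℕ∞) f) (k : ℕ) {x : ℝ → (Fin n → ℝ)}
    (hx : ∀ t, HasDerivAt x (f (x t)) t) (t : ℝ) :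
    HasDerivAt (fun s => lieIter f k (x s)) (lieIter f (k + 1) (x t)) t := by
  have hd : HasFDerivAt (lieIter f k) (fderiv ℝ (lieIter f k) (x t)) (x t) :=
    ((lieIter_contDiff hf k).differentiable (by simp) (x t)).hasFDerivAt
  exact hd.comp_hasDerivAt t (hx t)

theorem stmt_4 {n N : ℕ} (hN : 0 < N) (f : (Fin n → ℝ) → (Fin n → ℝ))
    (hf : ContDiff ℝ (⊤ : ℕ∞) f) (α : Fin N → ℝ)
    (hrec : lieIter f N = fun x => ∑ k : Fin N, α k • lieIter f (k : ℕ) x) :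
    ∃ A : Matrix (Fin n ⊕ (Fin N × Fin n)) (Fin n ⊕ (Fin N × Fin n)) ℝ,
      ∀ x : ℝ → (Fin n → ℝ), (∀ t, HasDerivAt x (f (x t)) t) →
        ∀ t, HasDerivAt
          (fun s => (Sum.elim (x s) (fun ji : Fin N × Fin n => lieIter f (ji.1 : ℕ) (x s) ji.2) :
            Fin n ⊕ (Fin N × Fin n) → ℝ))
          (A.mulVec (Sum.elim (x t) (fun ji : Fin N × Fin n => lieIter f (ji.1 : ℕ) (x t) ji.2)))
          t := by
  classical
  set A : Matrix (Fin n ⊕ (Fin N × Fin n)) (Fin n ⊕ (Fin N × Fin n)) ℝ := fun b => Sum.rec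
    (fun i => fun c => if c = Sum.inr (⟨0, hN⟩, i) then 1 else 0)
    (fun ji =>
      if h : (ji.1 : ℕ) + 1 < N then
        fun c => if c = Sum.inr (⟨(ji.1 : ℕ) + 1, h⟩, ji.2) then 1 else 0
      else Sum.elim 0 (fun p => if p.2 = ji.2 then α p.1 else 0)) b with hA
  refine ⟨A, ?_⟩
  intro x hx t
  set z : Fin n ⊕ (Fin N × Fin n) → ℝ :=
    Sum.elim (x t) (fun ji : Fin N × Fin n => lieIter f (ji.1 : ℕ) (x t) ji.2) with hz
  rw [hasDerivAt_pi]
  rintro (i | ⟨j, i⟩)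
  · -- component `x s i`
    have h1 : HasDerivAt (fun s => x s i) (f (x t) i) t := hasDerivAt_pi.mp (hx t) i
    have h2 : (A.mulVec z) (Sum.inl i) = f (x t) i := by
      simp [hA, hz, Matrix.mulVec, dotProduct, ite_mul, lieIter]
    simpa [h2] using h1
  · have h1 : HasDerivAt (fun s => lieIter f (j : ℕ) (x s) i)
        (lieIter f ((j : ℕ) + 1) (x t) i) t :=
      hasDerivAt_pi.mp (lieIter_deriv hf (j : ℕ) hx t) i
    by_cases h : (j : ℕ) + 1 < N
    · have h2 : (A.mulVec z) (Sum.inr (j, i))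
          = lieIter f ((j : ℕ) + 1) (x t) i := by
        simp [hA, hz, Matrix.mulVec, dotProduct, ite_mul, h]
      simpa [h2] using h1
    · have hj : (j : ℕ) + 1 = N := by omega
      have h2 : (A.mulVec z) (Sum.inr (j, i))
          = ∑ k : Fin N, α k * lieIter f (k : ℕ) (x t) i := by
        simp only [hA, Matrix.mulVec, dotProduct, h, dite_false]
        rw [Fintype.sum_sum_type]
        simp [hz, Fintype.sum_prod_type, ite_mul, Finset.sum_ite_eq']
      have h3 : lieIter f ((j : ℕ) + 1) (x t) i
          = ∑ k : Fin N, α k * lieIter f (k : ℕ) (x t) i := by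
        rw [hj, hrec]
        simp [Finset.sum_apply]
      simpa [h2, ← h3] using h1
end

section
/- Let f' : ℝᵏ → ℝᵏ be affine, f'(x') = A'x' + D, and consider the system ẋ' = f'(x'), ẋ'' = A''x'' + g(x') on ℝᵏ × ℝˡ with g a polynomial map. Then there exist m ≥ 0, a polynomial map p : ℝᵏ → ℝᵐ, a matrix A ∈ ℝ^{(k+l+m)×(k+l+m)}, and a vector D̂ ∈ ℝ^{k+l+m}, such that for every solution (x'(t), x''(t)) of the system, the curve z(t) := (x'(t), x''(t), p(x'(t))) satisfies ż = Az + D̂. -/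
/-!
Along a solution, the derivative of `q(x'(t))` for a polynomial `q` is `(L q)(x'(t))`, where
`L = ∑ᵢ fᵢ ∂ᵢ` is the derivation of the affine vector field `f'`. Since `f'` has degree at most one,
`L` does not raise the total degree, so `L` maps the finite-dimensional space `W` of polynomials
of degree at most `max deg gᵢ` to itself. Taking for `p` a basis of `W`, both `g` and `L p` are
linear in `p`, so `(x', x'', p(x'))` satisfies an affine linear system.
-/

open MvPolynomial

theorem Submodule.exists_linear_closure_of_mapsTo {K M ι : Type*} [Field K] [AddCommGroup M]
    [Module K M] (W : Submodule K M) [FiniteDimensional K W] {L : M → M}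
    (hL : Set.MapsTo L W W) {G : ι → M} (hG : ∀ i, G i ∈ W) :
    ∃ (m : ℕ) (P : Fin m → M) (γ : Matrix ι (Fin m) K) (β : Matrix (Fin m) (Fin m) K),
      (∀ i, G i = ∑ j, γ i j • P j) ∧ ∀ j, L (P j) = ∑ j', β j j' • P j' := by
  let b := Module.finBasis K W
  have expand : ∀ w : W, (w : M) = ∑ j, b.repr w j • (b j : M) := fun w => by
    conv_lhs => rw [← b.sum_repr w]
    simp only [Submodule.coe_sum, Submodule.coe_smul]
  exact ⟨_, fun j => b j, fun i => b.repr ⟨G i, hG i⟩, fun j => b.repr ⟨L (b j), hL (b j).2⟩,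
    fun i => expand ⟨G i, hG i⟩, fun j => expand ⟨L (b j), hL (b j).2⟩⟩

namespace MvPolynomial

variable {R σ : Type*} [CommSemiring R]

theorem totalDegree_mkDerivation_le {F : σ → MvPolynomial σ R}
    (hF : ∀ i, (F i).totalDegree ≤ 1) (q : MvPolynomial σ R) :
    (mkDerivation R F q).totalDegree ≤ q.totalDegree := by
  conv_lhs => rw [q.as_sum]
  rw [map_sum]
  refine (totalDegree_finsetSum _ _).trans (Finset.sup_le fun s hs => ?_)
  rw [mkDerivation_monomial]
  refine (totalDegree_smul_le _ _).trans ?_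
  refine (totalDegree_finsetSum _ _).trans (Finset.sup_le fun i hi => ?_)
  have hsi : Finsupp.single i 1 ≤ s := by
    simpa [Finsupp.single_le_iff, Nat.one_le_iff_ne_zero] using hi
  calc (monomial (s - Finsupp.single i 1) (s i : R) • F i).totalDegree
      ≤ (s - Finsupp.single i 1).degree + 1 :=
        (totalDegree_mul _ _).trans (add_le_add (totalDegree_monomial_le _ _) (hF i))
    _ = s.degree := by
        conv_rhs => rw [← tsub_add_cancel_of_le hsi]
        rw [map_add, Finsupp.degree_single]
    _ ≤ q.totalDegree := le_totalDegree hs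

variable [Fintype σ]

noncomputable def affine (a : σ → R) (c : R) : MvPolynomial σ R :=
  ∑ j, C (a j) * X j + C c

@[simp]
theorem eval_affine (a : σ → R) (c : R) (x : σ → R) : eval x (affine a c) = a ⬝ᵥ x + c := by
  simp [affine, dotProduct]

theorem totalDegree_affine_le (a : σ → R) (c : R) : (affine a c).totalDegree ≤ 1 := by
  refine (totalDegree_add _ _).trans (max_le ?_ (by simp))
  refine (totalDegree_finsetSum _ _).trans (Finset.sup_le fun j _ => ?_)
  rw [C_mul_X_eq_monomial]
  exact (totalDegree_monomial_le _ _).trans (by simp)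

end MvPolynomial

theorem HasDerivAt.mvPolynomial_eval {𝕜 σ : Type*} [NontriviallyNormedField 𝕜]
    [Fintype σ] {x : 𝕜 → σ → 𝕜} {F : σ → MvPolynomial σ 𝕜} {t : 𝕜}
    (hx : HasDerivAt x (fun i => eval (x t) (F i)) t) (q : MvPolynomial σ 𝕜) :
    HasDerivAt (fun s => eval (x s) q) (eval (x t) (mkDerivation 𝕜 F q)) t := by
  induction q using MvPolynomial.induction_on with
  | C a => simpa using hasDerivAt_const t a
  | add p q hp hq => simpa only [map_add] using hp.fun_add hq
  | mul_X p n hp =>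
    simp only [map_mul, eval_X, Derivation.leibniz, mkDerivation_X, map_add]
    exact (hp.fun_mul (hasDerivAt_pi.1 hx n)).congr_deriv (by simp; ring)

theorem HasDerivAt.sumElim {𝕜 ι κ : Type*} [NontriviallyNormedField 𝕜] [Fintype ι] [Fintype κ]
    {u : 𝕜 → ι → 𝕜} {v : 𝕜 → κ → 𝕜} {u' : ι → 𝕜} {v' : κ → 𝕜} {t : 𝕜}
    (hu : HasDerivAt u u' t) (hv : HasDerivAt v v' t) :
    HasDerivAt (fun s => Sum.elim (u s) (v s)) (Sum.elim u' v') t :=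
  hasDerivAt_pi.2 fun
    | .inl i => hasDerivAt_pi.1 hu i
    | .inr j => hasDerivAt_pi.1 hv j

theorem stmt_6 {k l : ℕ}
    (A' : Matrix (Fin k) (Fin k) ℝ) (D : Fin k → ℝ)
    (A'' : Matrix (Fin l) (Fin l) ℝ)
    (g : (Fin k → ℝ) → (Fin l → ℝ))
    (hg : ∃ G : Fin l → MvPolynomial (Fin k) ℝ, ∀ x i, g x i = eval x (G i)) :
    ∃ (m : ℕ) (p : (Fin k → ℝ) → (Fin m → ℝ))
      (_ : ∃ P : Fin m → MvPolynomial (Fin k) ℝ, ∀ x i, p x i = eval x (P i))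
      (A : Matrix (Fin k ⊕ Fin l ⊕ Fin m) (Fin k ⊕ Fin l ⊕ Fin m) ℝ)
      (Dhat : Fin k ⊕ Fin l ⊕ Fin m → ℝ),
      ∀ (x' : ℝ → Fin k → ℝ) (x'' : ℝ → Fin l → ℝ),
        (∀ t, HasDerivAt x' (A'.mulVec (x' t) + D) t) →
        (∀ t, HasDerivAt x'' (A''.mulVec (x'' t) + g (x' t)) t) →
        ∀ t, HasDerivAt
          (fun s => (Sum.elim (x' s) (Sum.elim (x'' s) (p (x' s))) :
            Fin k ⊕ Fin l ⊕ Fin m → ℝ))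
          (A.mulVec (Sum.elim (x' t) (Sum.elim (x'' t) (p (x' t)))) + Dhat) t := by
  obtain ⟨G, hG⟩ := hg
  let F : Fin k → MvPolynomial (Fin k) ℝ := fun i => affine (A' i) (D i)
  let W := restrictTotalDegree (Fin k) ℝ (Finset.univ.sup fun i => (G i).totalDegree)
  have hW : Set.MapsTo (mkDerivation ℝ F) W W := fun q hq => by
    simp only [SetLike.mem_coe, W, mem_restrictTotalDegree] at hq ⊢
    exact (totalDegree_mkDerivation_le (fun i => totalDegree_affine_le _ _) q).trans hq
  have hGW : ∀ i, G i ∈ W := fun i => (mem_restrictTotalDegree _ _ _).2 <|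
    Finset.le_sup (f := fun i => (G i).totalDegree) (Finset.mem_univ i)
  obtain ⟨m, P, γ, β, hGP, hLP⟩ := W.exists_linear_closure_of_mapsTo hW hGW
  refine ⟨m, fun x j => eval x (P j), ⟨P, fun _ _ => rfl⟩,
    Matrix.fromBlocks A' 0 0 (Matrix.fromBlocks A'' γ 0 β), Sum.elim D 0, ?_⟩
  intro x' x'' hx' hx'' t
  have hx'F : HasDerivAt x' (fun i => eval (x' t) (F i)) t := by
    convert hx' t using 1
    ext i
    simp [F, Matrix.mulVec]
  have hp : HasDerivAt (fun s j => eval (x' s) (P j)) (β.mulVec fun j => eval (x' t) (P j)) t :=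
    hasDerivAt_pi.2 fun j => by
      simpa [hLP, Matrix.mulVec, dotProduct] using hx'F.mvPolynomial_eval (P j)
  have hgP : g (x' t) = γ.mulVec fun j => eval (x' t) (P j) := funext fun i => by
    simp [hG, hGP, Matrix.mulVec, dotProduct]
  convert (hx' t).sumElim ((hx'' t).sumElim hp) using 1
  simp [Matrix.fromBlocks_mulVec, hgP, ← Sum.elim_add_add]
end
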